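/- arXiv:1706.04234 — 3 statements merged into one kernel-verified Lean document; each statement's English description precedes it below -/
import Mathlib

section
/- Let γ > 0, let Θ ∈ ℝ be a threshold, and let P⁻, P⁺ ∈ ℝ with P⁻ < P⁺ (the equilibria on the two sides of the wall). Suppose x : [t₀, t₂] → ℝ is continuous, solves x' = -γ(x - P⁻) on [t₀, t₁] and x' = -γ(x - P⁺) on [t₁, t₂], and that x is increasing on [t₀, t₁]. Then x is increasing on all of [t₀, t₂]; in particular x has no interior local maximum at t₁. -/
/-!
On each side of the wall the solution is `P + e^{-γ(t - a)} (x(a) - P)`, so it is strictly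
increasing exactly when it starts below the equilibrium `P`, and then it stays below `P`.
Increase on `[t₀, t₁]` thus forces `x(t₁) < P⁻ < P⁺`, so `x` starts below the new equilibrium
and keeps increasing on `[t₁, t₂]`.
-/

open Set Topology Real

section LinearRelaxation

variable {γ P a b : ℝ} {x : ℝ → ℝ}

lemma exp_mul_sub_eq_of_hasDerivWithinAt
    (hx : ∀ t ∈ Icc a b, HasDerivWithinAt x (-γ * (x t - P)) (Icc a b) t) :
    ∀ t ∈ Icc a b, exp (γ * (t - a)) * (x t - P) = x a - P := by
  let g : ℝ → ℝ := fun t => exp (γ * (t - a)) * (x t - P)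
  have hg : ∀ t ∈ Icc a b, HasDerivWithinAt g 0 (Icc a b) t := by
    intro t ht
    have hexp : HasDerivAt (fun t => exp (γ * (t - a))) (exp (γ * (t - a)) * γ) t := by
      simpa using ((hasDerivAt_id t).sub_const a).const_mul γ |>.exp
    exact (hexp.hasDerivWithinAt.mul ((hx t ht).sub_const P)).congr_deriv (by ring)
  have hconst := constant_of_has_deriv_right_zero
    (fun t ht => (hg t ht).continuousWithinAt)
    (fun t ht => (hg t (Ico_subset_Icc_self ht)).mono_of_mem_nhdsWithin
      (Icc_mem_nhdsGE_of_mem ht))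
  intro t ht
  simpa [g] using hconst t ht

lemma lt_equilibrium_of_lt_of_hasDerivWithinAt (hγ : 0 < γ) (hab : a < b)
    (hx : ∀ t ∈ Icc a b, HasDerivWithinAt x (-γ * (x t - P)) (Icc a b) t)
    (hlt : x a < x b) : x b < P := by
  have hb := exp_mul_sub_eq_of_hasDerivWithinAt hx b ⟨hab.le, le_rfl⟩
  have he : 1 < exp (γ * (b - a)) := one_lt_exp_iff.2 (by nlinarith)
  nlinarith

lemma strictMonoOn_of_lt_equilibrium (hγ : 0 < γ)
    (hx : ∀ t ∈ Icc a b, HasDerivWithinAt x (-γ * (x t - P)) (Icc a b) t)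
    (hbelow : x a < P) : StrictMonoOn x (Icc a b) := by
  intro s hs t ht hst
  have hs' := exp_mul_sub_eq_of_hasDerivWithinAt hx s hs
  have ht' := exp_mul_sub_eq_of_hasDerivWithinAt hx t ht
  have he : exp (γ * (s - a)) < exp (γ * (t - a)) := exp_lt_exp.2 (by nlinarith)
  have hneg : x s - P < 0 :=
    neg_of_mul_neg_right (hs'.trans_lt (sub_neg.2 hbelow)) (exp_pos _).le
  nlinarith [mul_lt_mul_of_neg_right he hneg]

end LinearRelaxation

lemma StrictMonoOn.not_isLocalMax {α β : Type*} [TopologicalSpace α] [Preorder α] [Preorder β]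
    {f : α → β} {s : Set α} {c : α} [(𝓝[>] c).NeBot] (hf : StrictMonoOn f s) (hc : c ∈ s)
    (hs : s ∈ 𝓝[>] c) : ¬ IsLocalMax f c := by
  intro hmax
  obtain ⟨y, hle, hy, hcy⟩ :=
    ((hmax.filter_mono nhdsWithin_le_nhds).and (Filter.inter_mem hs self_mem_nhdsWithin)).exists
  exact (hf hc hy hcy).not_ge hle

theorem stmt5_general (γ Pm Pp t₀ t₁ t₂ : ℝ) (hγ : 0 < γ) (hP : Pm < Pp)
    (ht₀ : t₀ < t₁) (ht₁ : t₁ < t₂) (x : ℝ → ℝ)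
    (hx₁ : ∀ t ∈ Set.Icc t₀ t₁, HasDerivWithinAt x (-γ * (x t - Pm)) (Set.Icc t₀ t₁) t)
    (hx₂ : ∀ t ∈ Set.Icc t₁ t₂, HasDerivWithinAt x (-γ * (x t - Pp)) (Set.Icc t₁ t₂) t)
    (hmono : StrictMonoOn x (Set.Icc t₀ t₁)) :
    StrictMonoOn x (Set.Icc t₀ t₂) ∧
    ¬ IsLocalMax x t₁ := by
  have hbelow : x t₁ < Pm := lt_equilibrium_of_lt_of_hasDerivWithinAt hγ ht₀ hx₁
    (hmono (left_mem_Icc.2 ht₀.le) (right_mem_Icc.2 ht₀.le) ht₀)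
  have hmono₂ : StrictMonoOn x (Icc t₁ t₂) :=
    strictMonoOn_of_lt_equilibrium hγ hx₂ (hbelow.trans hP)
  have hmonoAll : StrictMonoOn x (Icc t₀ t₂) := by
    rw [← Icc_union_Icc_eq_Icc ht₀.le ht₁.le]
    exact hmono.union hmono₂ (isGreatest_Icc ht₀.le) (isLeast_Icc ht₁.le)
  exact ⟨hmonoAll, hmonoAll.not_isLocalMax ⟨ht₀.le, ht₁.le⟩
    (Icc_mem_nhdsGT_of_mem ⟨ht₀.le, ht₁⟩)⟩

theorem stmt5 (γ Θ Pm Pp t₀ t₁ t₂ : ℝ) (hγ : 0 < γ) (hP : Pm < Pp)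
    (ht₀ : t₀ < t₁) (ht₁ : t₁ < t₂) (x : ℝ → ℝ)
    (hcont : ContinuousOn x (Set.Icc t₀ t₂))
    (hx₁ : ∀ t ∈ Set.Icc t₀ t₁, HasDerivWithinAt x (-γ * (x t - Pm)) (Set.Icc t₀ t₁) t)
    (hx₂ : ∀ t ∈ Set.Icc t₁ t₂, HasDerivWithinAt x (-γ * (x t - Pp)) (Set.Icc t₁ t₂) t)
    (hmono : StrictMonoOn x (Set.Icc t₀ t₁)) :
    StrictMonoOn x (Set.Icc t₀ t₂) ∧
    ¬ IsLocalMax x t₁ :=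
  stmt5_general γ Pm Pp t₀ t₁ t₂ hγ hP ht₀ ht₁ x hx₁ hx₂ hmono
end

section
/- Let γ > 0, Θ ∈ ℝ, P⁻ > P⁺ (equilibria on the two sides of a repressing wall). Suppose x : [t₀, t₂] → ℝ is continuous, solves x' = -γ(x - P⁻) on [t₀, t₁] and x' = -γ(x - P⁺) on [t₁, t₂], and x is decreasing on [t₀, t₁]. Then x is decreasing on all of [t₀, t₂]; in particular x has no interior local minimum at the switching time t₁. -/
/-!
On each side of the wall the solution relaxes exponentially towards its equilibrium,
`x t = P + (x a - P) * exp (-γ * (t - a))`, so it is strictly decreasing exactly when it starts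
above `P`. Decrease on `[t₀, t₁]` forces `x t₁ > P⁻ > P⁺`, hence the solution keeps decreasing on
`[t₁, t₂]`, and a function strictly decreasing to the right of `t₁` has no local minimum there.
-/

open Set Real Filter Topology

def IsRelaxationOn (γ P : ℝ) (x : ℝ → ℝ) (s : Set ℝ) : Prop :=
  ∀ t ∈ s, HasDerivWithinAt x (-γ * (x t - P)) s t

namespace IsRelaxationOn

variable {γ P a b : ℝ} {x : ℝ → ℝ}

theorem eq_add_mul_exp (hx : IsRelaxationOn γ P x (Icc a b)) :
    ∀ t ∈ Icc a b, x t = P + (x a - P) * exp (-γ * (t - a)) := by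
  -- `(x t - P) * exp (γ * t)` is a first integral.
  set f : ℝ → ℝ := fun t ↦ (x t - P) * exp (γ * t)
  have hf : ∀ t ∈ Icc a b, HasDerivWithinAt f 0 (Icc a b) t := fun t ht ↦ by
    have hexp : HasDerivWithinAt (fun s ↦ exp (γ * s)) (exp (γ * t) * γ) (Icc a b) t :=
      (((hasDerivAt_id t).const_mul γ).exp.hasDerivWithinAt).congr_deriv (by simp)
    exact (((hx t ht).sub_const P).mul hexp).congr_deriv (by ring)
  have hconst := constant_of_has_deriv_right_zero (HasDerivWithinAt.continuousOn hf)
    fun t ht ↦ (hf t (Ico_subset_Icc_self ht)).mono_of_mem_nhdsWithin (Icc_mem_nhdsGE_of_mem ht)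
  intro t ht
  have h : (x t - P) * exp (γ * t) = (x a - P) * exp (γ * a) := hconst t ht
  have hsplit : exp (γ * a) = exp (-γ * (t - a)) * exp (γ * t) := by
    rw [← exp_add]; congr 1; ring
  rw [hsplit, ← mul_assoc] at h
  linarith [mul_right_cancel₀ (exp_pos (γ * t)).ne' h]

theorem lt_of_lt_left (hx : IsRelaxationOn γ P x (Icc a b)) (ha : P < x a) :
    ∀ t ∈ Icc a b, P < x t := fun t ht ↦ by
  have := mul_pos (sub_pos.2 ha) (exp_pos (-γ * (t - a)))
  linarith [hx.eq_add_mul_exp t ht]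

theorem strictAntiOn_of_lt_left (hx : IsRelaxationOn γ P x (Icc a b)) (hγ : 0 < γ)
    (ha : P < x a) : StrictAntiOn x (Icc a b) := fun u hu v hv huv ↦ by
  have hexp : exp (-γ * (v - a)) < exp (-γ * (u - a)) := exp_lt_exp.2 (by nlinarith)
  rw [hx.eq_add_mul_exp u hu, hx.eq_add_mul_exp v hv]
  nlinarith [sub_pos.2 ha]

theorem lt_left_of_strictAntiOn (hx : IsRelaxationOn γ P x (Icc a b)) (hγ : 0 < γ) (hab : a < b)
    (hanti : StrictAntiOn x (Icc a b)) : P < x a := by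
  have hdec : x b < x a := hanti (left_mem_Icc.2 hab.le) (right_mem_Icc.2 hab.le) hab
  have hexp : exp (-γ * (b - a)) < 1 := exp_lt_one_iff.2 (by nlinarith)
  have := hx.eq_add_mul_exp b (right_mem_Icc.2 hab.le)
  nlinarith

end IsRelaxationOn

theorem not_isLocalMin_of_strictAntiOn {α β : Type*} [TopologicalSpace α] [LinearOrder α]
    [OrderTopology α] [NoMaxOrder α] [DenselyOrdered α] [Preorder β] {f : α → β} {s : Set α}
    {a : α} (hf : StrictAntiOn f s) (hs : s ∈ 𝓝[≥] a) : ¬IsLocalMin f a := fun hmin ↦ by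
  have hs' : s ∈ 𝓝[>] a := nhdsWithin_mono a Ioi_subset_Ici_self hs
  have hright : ∀ᶠ t in 𝓝[>] a, f a ≤ f t ∧ t ∈ s ∧ a < t := by
    filter_upwards [hmin.filter_mono nhdsWithin_le_nhds, hs', self_mem_nhdsWithin] with t h₁ h₂ h₃
    exact ⟨h₁, h₂, h₃⟩
  obtain ⟨t, hle, hts, hat⟩ := hright.exists
  exact (hf (mem_of_mem_nhdsWithin self_mem_Ici hs) hts hat).not_ge hle

theorem stmt6_general (γ Pm Pp t₀ t₁ t₂ : ℝ) (hγ : 0 < γ) (hP : Pp < Pm)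
    (ht₀ : t₀ < t₁) (ht₁ : t₁ < t₂) (x : ℝ → ℝ)
    (hx₁ : ∀ t ∈ Set.Icc t₀ t₁, HasDerivWithinAt x (-γ * (x t - Pm)) (Set.Icc t₀ t₁) t)
    (hx₂ : ∀ t ∈ Set.Icc t₁ t₂, HasDerivWithinAt x (-γ * (x t - Pp)) (Set.Icc t₁ t₂) t)
    (hmono : StrictAntiOn x (Set.Icc t₀ t₁)) :
    StrictAntiOn x (Set.Icc t₀ t₂) ∧
    ¬ IsLocalMin x t₁ := by
  have hPm : Pm < x t₁ :=
    IsRelaxationOn.lt_of_lt_left hx₁ (IsRelaxationOn.lt_left_of_strictAntiOn hx₁ hγ ht₀ hmono)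
      t₁ (right_mem_Icc.2 ht₀.le)
  have hanti₂ : StrictAntiOn x (Icc t₁ t₂) :=
    IsRelaxationOn.strictAntiOn_of_lt_left hx₂ hγ (hP.trans hPm)
  have hanti : StrictAntiOn x (Icc t₀ t₂) := by
    rw [← Icc_union_Icc_eq_Icc ht₀.le ht₁.le]
    exact hmono.union hanti₂ (isGreatest_Icc ht₀.le) (isLeast_Icc ht₁.le)
  exact ⟨hanti, not_isLocalMin_of_strictAntiOn hanti₂ (Icc_mem_nhdsGE ht₁)⟩

theorem stmt6 (γ Θ Pm Pp t₀ t₁ t₂ : ℝ) (hγ : 0 < γ) (hP : Pp < Pm)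
    (ht₀ : t₀ < t₁) (ht₁ : t₁ < t₂) (x : ℝ → ℝ)
    (hcont : ContinuousOn x (Set.Icc t₀ t₂))
    (hx₁ : ∀ t ∈ Set.Icc t₀ t₁, HasDerivWithinAt x (-γ * (x t - Pm)) (Set.Icc t₀ t₁) t)
    (hx₂ : ∀ t ∈ Set.Icc t₁ t₂, HasDerivWithinAt x (-γ * (x t - Pp)) (Set.Icc t₁ t₂) t)
    (hmono : StrictAntiOn x (Set.Icc t₀ t₁)) :
    StrictAntiOn x (Set.Icc t₀ t₂) ∧
    ¬ IsLocalMin x t₁ :=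
  stmt6_general γ Pm Pp t₀ t₁ t₂ hγ hP ht₀ ht₁ x hx₁ hx₂ hmono
end

section
/- Let γ > 0, Θ ∈ ℝ, and P⁻, P⁺ ∈ ℝ with P⁻ > Θ and P⁺ > Θ. Then for every initial condition x₀ with x₀ < Θ and x₀ < P⁻, the solution of x' = -γ(x - P⁻) starting at x₀ reaches Θ at some finite time T, and the solution of x' = -γ(x - P⁺) starting at Θ is strictly increasing; hence their concatenation is a strictly increasing function crossing Θ exactly once. -/
lemma ode_sol (γ P a : ℝ) (x : ℝ → ℝ)
    (hx : ∀ t, HasDerivAt x (-γ * (x t - P)) t) (h0 : x 0 = a) :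
    ∀ t, x t = P + (a - P) * Real.exp (-γ * t) := by
  have hg : ∀ t, HasDerivAt (fun t => (x t - P) * Real.exp (γ * t)) 0 t := by
    intro t
    have h1 : HasDerivAt (fun t => x t - P) (-γ * (x t - P)) t := (hx t).sub_const P
    have h2 : HasDerivAt (fun t => Real.exp (γ * t)) (γ * Real.exp (γ * t)) t := by
      have := (Real.hasDerivAt_exp (γ * t)).comp t ((hasDerivAt_id t).const_mul γ)
      simpa [mul_comm, Function.comp_def] using this
    have : HasDerivAt (fun t => (x t - P) * Real.exp (γ * t)) _ t := h1.fun_mul h2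
    convert this using 1; ring
  have key : ∀ t, (x t - P) * Real.exp (γ * t) = a - P := by
    intro t
    have hc := is_const_of_deriv_eq_zero (f := fun t => (x t - P) * Real.exp (γ * t))
      (fun t => (hg t).differentiableAt) (fun t => (hg t).deriv) t 0
    simpa [h0] using hc
  intro t
  have hE : Real.exp (-γ * t) = (Real.exp (γ * t))⁻¹ := by
    rw [neg_mul, Real.exp_neg]
  have hk := key t
  have hpos : (0:ℝ) < Real.exp (γ * t) := Real.exp_pos _
  rw [hE]
  field_simp
  nlinarith [hk]

theorem stmt10 (γ Θ Pm Pp x₀ : ℝ) (hγ : 0 < γ) (hPm : Θ < Pm) (hPp : Θ < Pp)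
    (hx₀ : x₀ < Θ) (hx₀' : x₀ < Pm) (x y : ℝ → ℝ)
    (hx : ∀ t, HasDerivAt x (-γ * (x t - Pm)) t) (hx0 : x 0 = x₀)
    (hy : ∀ t, HasDerivAt y (-γ * (y t - Pp)) t) (hy0 : y 0 = Θ) :
    ∃ T > 0, x T = Θ ∧ StrictMono y ∧
      StrictMono (fun t => if t ≤ T then x t else y (t - T)) ∧
      ∃! t : ℝ, (if t ≤ T then x t else y (t - T)) = Θ := by
  have hxf := ode_sol γ Pm x₀ x hx hx0
  have hyf := ode_sol γ Pp Θ y hy hy0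
  have hmx : StrictMono x := by
    intro s t hst
    rw [hxf s, hxf t]
    have he : Real.exp (-γ * t) < Real.exp (-γ * s) := by
      apply Real.exp_lt_exp.mpr; nlinarith
    nlinarith
  have hmy : StrictMono y := by
    intro s t hst
    rw [hyf s, hyf t]
    have he : Real.exp (-γ * t) < Real.exp (-γ * s) := by
      apply Real.exp_lt_exp.mpr; nlinarith
    nlinarith
  set r : ℝ := (Pm - x₀) / (Pm - Θ) with hr
  have hr1 : 1 < r := by
    rw [hr]; rw [lt_div_iff₀ (by linarith)]; linarith
  set T : ℝ := Real.log r / γ with hT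
  have hTpos : 0 < T := by
    apply div_pos (Real.log_pos hr1) hγ
  have hexpT : Real.exp (-γ * T) = (Pm - Θ) / (Pm - x₀) := by
    have : -γ * T = Real.log r⁻¹ := by
      rw [Real.log_inv, hT]; field_simp
    rw [this, Real.exp_log (by positivity)]
    rw [hr]; rw [inv_div]
  have hxT : x T = Θ := by
    rw [hxf T, hexpT]
    have hne : Pm - x₀ ≠ 0 := sub_ne_zero.mpr (ne_of_gt hx₀')
    field_simp
    ring
  refine ⟨T, hTpos, hxT, hmy, ?_, ?_⟩
  · -- strict mono of glued function
    intro s t hst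
    by_cases hs : s ≤ T
    · by_cases ht : t ≤ T
      · simp only [if_pos hs, if_pos ht]; exact hmx hst
      · simp only [if_pos hs, if_neg ht]
        push_neg at ht
        have h1 : x s ≤ x T := hmx.monotone hs
        have h2 : y 0 < y (t - T) := hmy (by linarith)
        rw [hy0] at h2
        linarith [h1, h2, hxT.le]
    · have ht : ¬ t ≤ T := by push_neg at hs ⊢; linarith
      simp only [if_neg hs, if_neg ht]
      exact hmy (by linarith)
  · -- unique crossing
    have hsm : StrictMono (fun t => if t ≤ T then x t else y (t - T)) := by
      intro s t hst
      by_cases hs : s ≤ T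
      · by_cases ht : t ≤ T
        · simp only [if_pos hs, if_pos ht]; exact hmx hst
        · simp only [if_pos hs, if_neg ht]
          push_neg at ht
          have h1 : x s ≤ x T := hmx.monotone hs
          have h2 : y 0 < y (t - T) := hmy (by linarith)
          rw [hy0] at h2
          linarith [h1, h2, hxT.le]
      · have ht : ¬ t ≤ T := by push_neg at hs ⊢; linarith
        simp only [if_neg hs, if_neg ht]
        exact hmy (by linarith)
    refine ⟨T, ?_, ?_⟩
    · simp only [le_refl, if_pos]; exact hxT
    · intro t ht
      have hTval : (if T ≤ T then x T else y (T - T)) = Θ := by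
        simp only [le_refl, if_pos]; exact hxT
      exact hsm.injective (ht.trans hTval.symm)
end
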